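/- arXiv:2003.10585 — 2 statements merged into one kernel-verified Lean document; each statement's English description precedes it below -/
import Mathlib

section
/- Let W, w, C be as above, and suppose the series x_0 = Σ_{k=0}^∞ W^k w u_{-k} converges. If s_j := Σ_{k=0}^∞ φ_j^{(k)} u_{-k} converges for each j, where the φ_j^{(k)} are the Cayley–Hamilton expansion coefficients of W^k in the basis I, W, ..., W^{n-1}, then x_0 = C s, where s = (s_0, ..., s_{n-1}). -/
/-!
Expanding each `W ^ k` in the basis `1, W, …, W ^ (n - 1)` rewrites the `k`-th term of the series
for `x₀` as `∑ j, (φ k j * u k) • W ^ j w`. This is a finite sum over `j`, so it may be summed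
term by term in `k`, which gives `∑ j, s j • W ^ j w`, i.e. the product of `C` with `s`.
-/

open Matrix Finset

theorem Matrix.of_columns_mulVec {m n R : Type*} [Fintype n] [CommSemiring R]
    (v : n → m → R) (s : n → R) :
    (Matrix.of fun i j => v j i) *ᵥ s = ∑ j, s j • v j := by
  ext i
  simp [mulVec, dotProduct, Finset.sum_apply, mul_comm]

theorem HasSum.sum_smul_const {κ ι R M : Type*} [Semiring R] [TopologicalSpace R]
    [AddCommMonoid M] [Module R M] [TopologicalSpace M] [ContinuousSMul R M]
    [ContinuousAdd M] {c : κ → ι → R} {s : ι → R} (t : Finset ι) (b : ι → M)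
    (hs : ∀ j ∈ t, HasSum (fun k => c k j) (s j)) :
    HasSum (fun k => ∑ j ∈ t, c k j • b j) (∑ j ∈ t, s j • b j) :=
  hasSum_sum fun j hj => (hs j hj).smul_const (b j)

theorem Matrix.pow_mulVec_eq_sum_of_pow_eq_sum {n : ℕ} {R : Type*} [CommSemiring R]
    {W : Matrix (Fin n) (Fin n) R} {φ : ℕ → ℕ → R}
    (hφ : ∀ k, W ^ k = ∑ j ∈ range n, φ k j • W ^ j) (w : Fin n → R) (k : ℕ) :
    W ^ k *ᵥ w = ∑ j : Fin n, φ k j • (W ^ (j : ℕ) *ᵥ w) := by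
  rw [hφ k, sum_mulVec, ← Fin.sum_univ_eq_sum_range (fun j => (φ k j • W ^ j) *ᵥ w)]
  simp only [smul_mulVec]

/-- the converged state decouples as `x₀ = C s`, where `C` is the
controllability matrix and `s` the network encoded input. -/
theorem state_eq_controllability_mul_encoded_input
    (n : ℕ) (W : Matrix (Fin n) (Fin n) ℝ) (w : Fin n → ℝ) (u : ℕ → ℝ)
    (φ : ℕ → ℕ → ℝ)
    (hφ : ∀ k : ℕ, W ^ k = ∑ j ∈ Finset.range n, φ k j • W ^ j)
    (x₀ : Fin n → ℝ)
    (hx : HasSum (fun k : ℕ => u k • (W ^ k).mulVec w) x₀)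
    (s : Fin n → ℝ)
    (hs : ∀ j : Fin n, HasSum (fun k : ℕ => φ k (j : ℕ) * u k) (s j))
    (C : Matrix (Fin n) (Fin n) ℝ)
    (hC : C = Matrix.of fun i j : Fin n => ((W ^ (j : ℕ)).mulVec w) i) :
    x₀ = C.mulVec s := by
  have hterm : ∀ k, u k • W ^ k *ᵥ w = ∑ j : Fin n, (φ k j * u k) • (W ^ (j : ℕ) *ᵥ w) := by
    intro k
    simp only [pow_mulVec_eq_sum_of_pow_eq_sum hφ w k, smul_sum, smul_smul, mul_comm]
  have hsum := HasSum.sum_smul_const univ (fun j : Fin n => W ^ (j : ℕ) *ᵥ w) fun j _ => hs j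
  simp only [← hterm] at hsum
  rw [hx.unique hsum, hC, of_columns_mulVec]
end

section
/- For the scaled cyclic reservoir W = ρ W_c with 0 < ρ < 1, bounded input u, and w ∈ ℝ^n, the state at time 0 satisfies x_0 = Σ_{j=0}^{n-1} w^{(j)} · s̃_j, where w^{(j)} = W_c^j w is the j-times cyclically permuted input weight vector and s̃_j = Σ_{p=0}^∞ ρ^{j+pn} u_{-(j+pn)}. -/
/-!
Since `W_c ^ n = 1`, the term of index `k = j + p n` of the state series is
`(ρ ^ k u_k) • W_c ^ j w`. The scalar series `∑ ρ ^ k u_k` converges absolutely because `|ρ| < 1`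
and `u` is bounded, so summing separately over the `n` residue classes of `k` modulo `n` gives the
decomposition.
-/

open Matrix Finset

theorem hasSum_of_hasSum_residueClasses {α : Type*} [AddCommMonoid α] [TopologicalSpace α]
    [ContinuousAdd α] {f : ℕ → α} {n : ℕ} (hn : 0 < n) {b : ℕ → α}
    (hb : ∀ j < n, HasSum (fun p => f (j + p * n)) (b j)) :
    HasSum f (∑ j ∈ range n, b j) := by
  -- `f` is the sum of its restrictions to the residue classes, each summable by `hb`.
  have hclass : ∀ j ∈ range n, HasSum (fun k => if k % n = j then f k else 0) (b j) := by
    intro j hj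
    have hj : j < n := mem_range.mp hj
    rw [← ((add_right_injective j).comp (mul_left_injective₀ hn.ne')).hasSum_iff]
    · convert hb j hj using 2 with p
      simp [Nat.mod_eq_of_lt hj]
    · intro k hk
      refine if_neg fun hkj => hk ⟨k / n, ?_⟩
      rw [← hkj]
      exact Nat.mod_add_div' k n
  simpa [sum_ite_eq, Nat.mod_lt _ hn] using hasSum_sum hclass

theorem Summable.hasSum_smul_of_periodic {R M : Type*} [Ring R] [UniformSpace R]
    [IsUniformAddGroup R] [CompleteSpace R] [AddCommMonoid M] [TopologicalSpace M]
    [ContinuousAdd M] [Module R M] [ContinuousSMul R M] {n : ℕ} (hn : 0 < n) {a : ℕ → R}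
    (ha : Summable a) {v : ℕ → M} (hv : Function.Periodic v n) :
    HasSum (fun k => a k • v k) (∑ j ∈ range n, (∑' p, a (j + p * n)) • v j) := by
  refine hasSum_of_hasSum_residueClasses hn fun j _ => ?_
  have hvj : ∀ p, v (j + p * n) = v j := fun p => hv.nat_mul p j
  simp only [hvj]
  exact (ha.comp_injective ((add_right_injective j).comp (mul_left_injective₀ hn.ne'))).hasSum
    |>.smul_const (v j)

theorem summable_pow_mul_of_norm_le {𝕜 : Type*} [NormedField 𝕜] [CompleteSpace 𝕜] {ρ : 𝕜}
    (hρ : ‖ρ‖ < 1) {u : ℕ → 𝕜} {C : ℝ} (hu : ∀ k, ‖u k‖ ≤ C) :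
    Summable fun k => ρ ^ k * u k := by
  refine .of_norm_bounded ((summable_geometric_of_lt_one (norm_nonneg ρ) hρ).mul_right C) ?_
  intro k
  rw [norm_mul, norm_pow]
  gcongr
  exact hu k

def cyclicShift (R : Type*) [Zero R] [One R] (n : ℕ) : Matrix (Fin n) (Fin n) R :=
  Matrix.of fun i j => if ((i : ℕ) + 1) % n = j then 1 else 0

section cyclicShift

variable {R : Type*} [Semiring R] {n : ℕ}

theorem cyclicShift_mulVec_apply (v : Fin n → R) (i : Fin n) :
    (cyclicShift R n *ᵥ v) i = v ⟨((i : ℕ) + 1) % n, Nat.mod_lt _ i.pos⟩ := by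
  rw [mulVec, dotProduct,
    sum_eq_single_of_mem _ (mem_univ ⟨((i : ℕ) + 1) % n, Nat.mod_lt _ i.pos⟩)]
  · simp [cyclicShift]
  · intro j _ hj
    rw [cyclicShift, of_apply, if_neg fun h => hj (Fin.ext h.symm), zero_mul]

theorem cyclicShift_pow_mulVec_apply (k : ℕ) (v : Fin n → R) (i : Fin n) :
    (cyclicShift R n ^ k *ᵥ v) i = v ⟨((i : ℕ) + k) % n, Nat.mod_lt _ i.pos⟩ := by
  induction k generalizing v with
  | zero => simp [Nat.mod_eq_of_lt i.isLt]
  | succ k ih =>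
    rw [pow_succ, ← mulVec_mulVec, ih, cyclicShift_mulVec_apply]
    simp only [Nat.mod_add_mod, add_assoc]

theorem cyclicShift_pow_self : cyclicShift R n ^ n = 1 :=
  ext_iff_mulVec.mpr fun v => funext fun i => by
    rw [cyclicShift_pow_mulVec_apply, one_mulVec]
    simp [Nat.mod_eq_of_lt i.isLt]

theorem cyclicShift_pow_mulVec_periodic (w : Fin n → R) :
    Function.Periodic (fun k => cyclicShift R n ^ k *ᵥ w) n := fun k => by
  simp only [pow_add, cyclicShift_pow_self, mul_one]

end cyclicShift

/-- for the scaled cyclic reservoir, the state decomposes as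
`x₀ = ∑_{j=0}^{n-1} s̃_j · W_c^j w` with `s̃_j = ∑_{p=0}^∞ ρ^{j+pn} u_{-(j+pn)}`. -/
theorem cyclic_state_decomposition
    (n : ℕ) (hn : 0 < n) (Wc : Matrix (Fin n) (Fin n) ℝ)
    (hWc : Wc = Matrix.of fun i j : Fin n =>
      if ((i : ℕ) + 1) % n = (j : ℕ) then (1 : ℝ) else 0)
    (ρ : ℝ) (hρ0 : 0 < ρ) (hρ1 : ρ < 1)
    (u : ℕ → ℝ) (hu : ∃ U : ℝ, 0 < U ∧ ∀ k, |u k| ≤ U)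
    (w : Fin n → ℝ) :
    ∑' k : ℕ, u k • ((ρ • Wc) ^ k).mulVec w
      = ∑ j ∈ Finset.range n,
          (∑' p : ℕ, ρ ^ (j + p * n) * u (j + p * n)) • (Wc ^ j).mulVec w := by
  obtain ⟨U, -, hU⟩ := hu
  replace hWc : Wc = cyclicShift ℝ n := hWc
  subst hWc
  have hρ : ‖ρ‖ < 1 := by rwa [Real.norm_of_nonneg hρ0.le]
  have hdecomp := (summable_pow_mul_of_norm_le hρ hU).hasSum_smul_of_periodic hn
    (cyclicShift_pow_mulVec_periodic w)
  rw [← hdecomp.tsum_eq]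
  exact tsum_congr fun k => by rw [smul_pow, smul_mulVec, smul_smul, mul_comm]
end
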